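/- Let $\tilde{X} \subseteq \{1,\dots,k\}^{\mathbb{Z}}$ be the shift of finite type forbidding $aa$ and $(ab)^{\lambda_{ab}+1}$ for adjacent pairs $a,b$, and let $X \subseteq \tilde{X}$ be the subset of sequences that additionally contain no eventually periodic tail of the form $\overline{abc}$ (infinite repetition of a triple of labels sharing a vertex) in either direction. Then $X$ is dense in $\tilde{X}$, and $\tilde{X}$ is the closure of $X$ in the full shift. -/

import Mathlib

/-!
`X̃` is closed because each of its constraints only involves a finite window. For density, keep
`x ∈ X̃` on a window `[p, q]` and continue it on both sides by the `4`-periodic word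
`⋯ 0123 0123 ⋯` in four distinct letters, shifted so that the letter just beyond each seam
differs from the two letters of `x` next to that seam. Outside `[p, q]` letters at distance `1`,
`2` or `3` then differ, which rules out `aa`, period-`3` tails, and alternating words `(ab)^m` with
`m ≥ 2` (these repeat a letter at distance `2`); across the seams the choice of shifts rules them
out, and inside `[p, q]` they are already absent from `x`.
-/

/-- `x` contains the alternating word `(ab)^m` starting at some index. -/
def ContainsAltWord {A : Type*} (x : ℤ → A) (a b : A) (m : ℕ) : Prop :=
  ∃ i : ℤ, ∀ j : ℕ, j < 2 * m → x (i + j) = (if Even j then a else b)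

/-- `x` has a forward tail `abc abc abc ⋯` : from some index on, `x` is the
periodic repetition of the word `abc`. -/
def HasFwdTail {A : Type*} (x : ℤ → A) (a b c : A) : Prop :=
  ∃ N : ℤ, ∀ m : ℕ,
    x (N + 3 * m) = a ∧ x (N + 3 * m + 1) = b ∧ x (N + 3 * m + 2) = c

/-- `x` has a backward tail `⋯ abc abc abc` : up to some index, `x` is the
periodic repetition of the word `abc`. -/
def HasBwdTail {A : Type*} (x : ℤ → A) (a b c : A) : Prop :=
  ∃ N : ℤ, ∀ m : ℕ,
    x (N - 3 * m) = a ∧ x (N - 3 * m + 1) = b ∧ x (N - 3 * m + 2) = c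

open Filter Set

variable {A : Type*}

section Topology

variable [TopologicalSpace A] [DiscreteTopology A]

theorem isClosed_setOf_forall_apply_ne_apply_add_one :
    IsClosed {x : ℤ → A | ∀ j, x j ≠ x (j + 1)} := by
  simp only [ofPred_forall]
  exact isClosed_iInter fun j => (isClosed_discrete {p : A × A | p.1 ≠ p.2}).preimage
    (f := fun x : ℤ → A => (x j, x (j + 1))) (by fun_prop)

theorem isOpen_setOf_containsAltWord (a b : A) (m : ℕ) :
    IsOpen {x : ℤ → A | ContainsAltWord x a b m} := by
  simp only [ContainsAltWord, ofPred_exists, ofPred_forall]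
  exact isOpen_iUnion fun i => (Set.finite_lt_nat _).isOpen_biInter fun j _ =>
    (isOpen_discrete {if Even j then a else b}).preimage
      (f := fun x : ℤ → A => x (i + j)) (continuous_apply _)

theorem isClosed_setOf_forall_not_containsAltWord (P : A → A → Prop) (m : A → A → ℕ) :
    IsClosed {x : ℤ → A | ∀ a b, P a b → ¬ ContainsAltWord x a b (m a b)} := by
  simp only [ofPred_forall]
  exact isClosed_iInter fun a => isClosed_iInter fun b => isClosed_iInter fun _ =>
    (isOpen_setOf_containsAltWord a b _).isClosed_compl

end Topology

theorem mem_closure_of_forall_eqOn_Icc [TopologicalSpace A] {S : Set (ℤ → A)} {x : ℤ → A}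
    (h : ∀ n : ℕ, ∃ y ∈ S, EqOn y x (Icc (-n) n)) : x ∈ closure S := by
  choose y hyS hyx using h
  refine mem_closure_of_tendsto (tendsto_pi_nhds.2 fun j => ?_)
    (Eventually.of_forall (f := atTop) hyS)
  refine tendsto_const_nhds.congr' (eventually_atTop.2 ⟨j.natAbs, fun n hn => ?_⟩)
  exact (hyx n ⟨by omega, by omega⟩).symm

theorem apply_add_two_eq_of_altWord {x : ℤ → A} {a b : A} {m : ℕ} {i : ℤ}
    (hi : ∀ j : ℕ, j < 2 * m → x (i + j) = if Even j then a else b) {t : ℤ} (hit : i ≤ t)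
    (ht : t + 2 < i + 2 * m) : x (t + 2) = x t := by
  have h₁ := hi (t - i).toNat (by omega)
  have h₂ := hi ((t - i).toNat + 2) (by omega)
  rw [show i + ((t - i).toNat : ℤ) = t by omega] at h₁
  rw [show i + (((t - i).toNat + 2 : ℕ) : ℤ) = t + 2 by omega] at h₂
  simp [h₁, h₂, Nat.even_add]

theorem HasFwdTail.frequently_apply_add_three_eq {x : ℤ → A} {a b c : A}
    (h : HasFwdTail x a b c) : ∃ᶠ t in atTop, x (t + 3) = x t := by
  obtain ⟨N, hN⟩ := h
  refine frequently_atTop.2 fun T => ⟨N + 3 * (T - N).toNat, by omega, ?_⟩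
  rw [show N + 3 * ((T - N).toNat : ℤ) + 3 = N + 3 * (((T - N).toNat + 1 : ℕ) : ℤ) by
    push_cast; ring, (hN _).1, (hN _).1]

theorem HasBwdTail.frequently_apply_add_three_eq {x : ℤ → A} {a b c : A}
    (h : HasBwdTail x a b c) : ∃ᶠ t in atBot, x (t + 3) = x t := by
  obtain ⟨N, hN⟩ := h
  refine frequently_atBot.2 fun T => ⟨N - 3 * (((N - T).toNat + 1 : ℕ) : ℤ), by omega, ?_⟩
  rw [show N - 3 * (((N - T).toNat + 1 : ℕ) : ℤ) + 3 = N - 3 * ((N - T).toNat : ℤ) by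
    push_cast; ring, (hN _).1, (hN _).1]

def NoRepeatWithin (d : ℤ) (v : ℤ → A) : Prop :=
  ∀ t r : ℤ, 0 < r → r ≤ d → v (t + r) ≠ v t

namespace NoRepeatWithin

variable {d : ℤ} {v : ℤ → A}

theorem mono {e : ℤ} (h : NoRepeatWithin d v) (hed : e ≤ d) : NoRepeatWithin e v :=
  fun t r hr hre => h t r hr (hre.trans hed)

theorem comp_add_right (h : NoRepeatWithin d v) (s : ℤ) : NoRepeatWithin d fun t => v (t + s) :=
  fun t r hr hrd => by simpa only [add_right_comm] using h (t + s) r hr hrd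

theorem exists_ne_ne (h : NoRepeatWithin 2 v) (t : ℤ) (a b : A) :
    ∃ s, v (t + s) ≠ a ∧ v (t + s) ≠ b := by
  by_contra! hv
  have h₁ := h t 1 one_pos one_le_two
  have h₂ := h t 2 two_pos le_rfl
  have h₁₂ := h (t + 1) 1 one_pos one_le_two
  rw [add_assoc] at h₁₂
  have hv₀ := hv 0
  have hv₁ := hv 1
  have hv₂ := hv 2
  rw [add_zero] at hv₀
  by_cases v t = a <;> by_cases v (t + 1) = a <;> simp_all

end NoRepeatWithin

theorem noRepeatWithin_zmod_four (e : ZMod 4 ↪ A) : NoRepeatWithin 3 fun t : ℤ => e t := by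
  intro t r hr hr3 h
  have h4 : (r : ZMod 4) = 0 := by
    simpa only [Int.cast_add, add_eq_left] using e.injective h
  rw [ZMod.intCast_zmod_eq_zero_iff_dvd] at h4
  omega

def splice (L x R : ℤ → A) (p q : ℤ) (j : ℤ) : A :=
  if j < p then L j else if j ≤ q then x j else R j

section Splice

variable {L x R : ℤ → A} {p q j : ℤ}

theorem splice_of_lt (hj : j < p) : splice L x R p q j = L j := if_pos hj

theorem splice_of_mem (hpj : p ≤ j) (hjq : j ≤ q) : splice L x R p q j = x j := by
  rw [splice, if_neg hpj.not_gt, if_pos hjq]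

theorem splice_of_gt (hpq : p ≤ q) (hj : q < j) : splice L x R p q j = R j := by
  rw [splice, if_neg (by omega), if_neg hj.not_ge]

theorem eqOn_splice : EqOn (splice L x R p q) x (Icc p q) := fun _ hj => splice_of_mem hj.1 hj.2

theorem splice_ne_add_one (hpq : p ≤ q) (hx : ∀ j, x j ≠ x (j + 1)) (hL : NoRepeatWithin 1 L)
    (hR : NoRepeatWithin 1 R) (hLp : L (p - 1) ≠ x p) (hRq : R (q + 1) ≠ x q) (j : ℤ) :
    splice L x R p q j ≠ splice L x R p q (j + 1) := by
  rcases lt_trichotomy (j + 1) p with hj | hj | hj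
  · rw [splice_of_lt hj, splice_of_lt (by omega)]
    exact (hL j 1 one_pos le_rfl).symm
  · obtain rfl : j = p - 1 := by omega
    rw [sub_add_cancel, splice_of_lt (by omega), splice_of_mem le_rfl hpq]
    exact hLp
  rcases lt_trichotomy j q with hj' | hj' | hj'
  · rw [splice_of_mem (by omega) hj'.le, splice_of_mem (by omega) (by omega)]
    exact hx j
  · rw [splice_of_mem (by omega) hj'.le, splice_of_gt hpq (by omega), hj']
    exact hRq.symm
  · rw [splice_of_gt hpq hj', splice_of_gt hpq (by omega)]
    exact (hR j 1 one_pos le_rfl).symm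

theorem containsAltWord_of_containsAltWord_splice (hpq : p < q) (hL : NoRepeatWithin 2 L)
    (hR : NoRepeatWithin 2 R) (hLp : L (p - 1) ≠ x (p + 1)) (hRq : R (q + 1) ≠ x (q - 1))
    {a b : A} {m : ℕ} (hm : 2 ≤ m) (h : ContainsAltWord (splice L x R p q) a b m) :
    ContainsAltWord x a b m := by
  obtain ⟨i, hi⟩ := h
  have step := fun t => apply_add_two_eq_of_altWord hi (t := t)
  by_cases hpi : p ≤ i
  · by_cases hiq : i + 2 * m ≤ q + 1
    · exact ⟨i, fun j hj => by rw [← hi j hj, splice_of_mem (by omega) (by omega)]⟩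
    by_cases hi' : i ≤ q - 1
    · refine absurd ?_ hRq
      have := step (q - 1) hi' (by omega)
      rwa [show q - 1 + 2 = q + 1 by ring, splice_of_gt hpq.le (by omega),
        splice_of_mem (by omega) (by omega)] at this
    · refine absurd ?_ (hR (i + 1) 2 two_pos le_rfl)
      have := step (i + 1) (by omega) (by omega)
      rwa [splice_of_gt hpq.le (by omega), splice_of_gt hpq.le (by omega)] at this
  by_cases hi' : p + 1 < i + 2 * m
  · refine absurd ?_ hLp
    have := step (p - 1) (by omega) (by omega)
    rwa [show p - 1 + 2 = p + 1 by ring, splice_of_mem (by omega) (by omega),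
      splice_of_lt (by omega), eq_comm] at this
  · refine absurd ?_ (hL i 2 two_pos le_rfl)
    have := step i le_rfl (by omega)
    rwa [splice_of_lt (by omega), splice_of_lt (by omega)] at this

theorem not_hasFwdTail_splice (hpq : p ≤ q) (hR : NoRepeatWithin 3 R) (a b c : A) :
    ¬ HasFwdTail (splice L x R p q) a b c := fun h =>
  (h.frequently_apply_add_three_eq.and_eventually (eventually_gt_atTop q)).exists.elim
    fun t ⟨ht, htq⟩ => hR t 3 three_pos le_rfl <| by
      rwa [splice_of_gt hpq (by omega), splice_of_gt hpq htq] at ht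

theorem not_hasBwdTail_splice (hL : NoRepeatWithin 3 L) (a b c : A) :
    ¬ HasBwdTail (splice L x R p q) a b c := fun h =>
  (h.frequently_apply_add_three_eq.and_eventually (eventually_lt_atBot (p - 3))).exists.elim
    fun t ⟨ht, htp⟩ => hL t 3 three_pos le_rfl <| by
      rwa [splice_of_lt (by omega), splice_of_lt (by omega)] at ht

end Splice

theorem exists_eqOn_Icc_without_period_three_tails (e : ZMod 4 ↪ A) {x : ℤ → A}
    (hx : ∀ j, x j ≠ x (j + 1)) {p q : ℤ} (hpq : p < q) :
    ∃ y : ℤ → A, EqOn y x (Icc p q) ∧ (∀ j, y j ≠ y (j + 1)) ∧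
      (∀ a b m, 2 ≤ m → ContainsAltWord y a b m → ContainsAltWord x a b m) ∧
      ∀ a b c, ¬ HasFwdTail y a b c ∧ ¬ HasBwdTail y a b c := by
  have hv := noRepeatWithin_zmod_four e
  obtain ⟨sL, hsL⟩ := (hv.mono (by norm_num)).exists_ne_ne (p - 1) (x p) (x (p + 1))
  obtain ⟨sR, hsR⟩ := (hv.mono (by norm_num)).exists_ne_ne (q + 1) (x q) (x (q - 1))
  have hL := hv.comp_add_right sL
  have hR := hv.comp_add_right sR
  refine ⟨splice (fun t => e (t + sL : ℤ)) x (fun t => e (t + sR : ℤ)) p q, eqOn_splice,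
    splice_ne_add_one hpq.le hx (hL.mono (by norm_num)) (hR.mono (by norm_num)) hsL.1 hsR.1,
    fun a b m hm => containsAltWord_of_containsAltWord_splice hpq (hL.mono (by norm_num))
      (hR.mono (by norm_num)) hsL.2 hsR.2 hm,
    fun a b c => ⟨not_hasFwdTail_splice hpq.le hR a b c, not_hasBwdTail_splice hL a b c⟩⟩

theorem code_space_closure_general
    (k : ℕ) (hk : 4 ≤ k)
    (Adj : Fin k → Fin k → Prop)
    (lam : Fin k → Fin k → ℕ) (hlam : ∀ a b, Adj a b → 2 ≤ lam a b)
    (VT : Set (Fin k × Fin k × Fin k)) :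
    closure {x : ℤ → Fin k |
        ((∀ j : ℤ, x j ≠ x (j + 1)) ∧
          ∀ a b : Fin k, Adj a b → ¬ ContainsAltWord x a b (lam a b + 1)) ∧
        ∀ t ∈ VT, ¬ HasFwdTail x t.1 t.2.1 t.2.2 ∧
          ¬ HasBwdTail x t.1 t.2.1 t.2.2} =
      {x : ℤ → Fin k |
        (∀ j : ℤ, x j ≠ x (j + 1)) ∧
        ∀ a b : Fin k, Adj a b → ¬ ContainsAltWord x a b (lam a b + 1)} := by
  have hclosed := isClosed_setOf_forall_apply_ne_apply_add_one.inter
    (isClosed_setOf_forall_not_containsAltWord Adj fun a b => lam a b + 1)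
  refine (closure_minimal (fun x hx => hx.1) hclosed).antisymm fun x ⟨hx, hxalt⟩ => ?_
  refine mem_closure_of_forall_eqOn_Icc fun n => ?_
  obtain ⟨y, hyx, hy, hyalt, hytail⟩ := exists_eqOn_Icc_without_period_three_tails
    (Fin.castLEEmb hk) hx (show -(n : ℤ) < n + 1 by omega)
  refine ⟨y, ⟨⟨hy, fun a b hab h => hxalt a b hab (hyalt a b _ ?_ h)⟩,
    fun t _ => hytail _ _ _⟩, hyx.mono (Icc_subset_Icc le_rfl (by omega))⟩
  linarith [hlam a b hab]

/-- Let `X̃ ⊆ {1,…,k}^ℤ` be the shift of finite type forbidding `aa` and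
`(ab)^{λ_{ab}+1}` for adjacent pairs `a, b`, and let `X ⊆ X̃` be the subset of
sequences that additionally contain no eventually periodic tail `abc abc ⋯`
(for a vertex triple `a, b, c` of labels of faces sharing a vertex) in either
direction.  Then `X` is dense in `X̃` and `X̃` is the closure of `X` in the full
shift. -/
theorem code_space_closure
    (k : ℕ) (hk : 4 ≤ k)
    (Adj : Fin k → Fin k → Prop)
    (hsymm : ∀ a b, Adj a b → Adj b a) (hirr : ∀ a, ¬ Adj a a)
    (lam : Fin k → Fin k → ℕ) (hlam : ∀ a b, Adj a b → 2 ≤ lam a b)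
    (VT : Set (Fin k × Fin k × Fin k))
    (hVT : ∀ t ∈ VT, Adj t.1 t.2.1 ∧ Adj t.2.1 t.2.2 ∧ Adj t.1 t.2.2) :
    closure {x : ℤ → Fin k |
        ((∀ j : ℤ, x j ≠ x (j + 1)) ∧
          ∀ a b : Fin k, Adj a b → ¬ ContainsAltWord x a b (lam a b + 1)) ∧
        ∀ t ∈ VT, ¬ HasFwdTail x t.1 t.2.1 t.2.2 ∧
          ¬ HasBwdTail x t.1 t.2.1 t.2.2} =
      {x : ℤ → Fin k |
        (∀ j : ℤ, x j ≠ x (j + 1)) ∧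
        ∀ a b : Fin k, Adj a b → ¬ ContainsAltWord x a b (lam a b + 1)} :=
  code_space_closure_general k hk Adj lam hlam VT
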